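/- arXiv:1504.00984 — 2 statements merged into one kernel-verified Lean document; each statement's English description precedes it below -/
import Mathlib

section
/- Let V be a linear subspace of ℝⁿ, let Ω ⊆ S^{n−1} ∩ V⊥, let C ⊆ S^{n−1}, and define P := {r·u + v : r ∈ [0,1], u ∈ Ω, v ∈ V}. If P ∩ C is nonempty, then W(P ∩ C) = P ∩ W(C). -/
/-!
`P = W(Ω) + V` is closed under scaling by `[0,1]`, which gives `W(P ∩ C) ⊆ P ∩ W(C)`.
Conversely, if `r • x ∈ P` with `‖x‖ = 1` and `r > 0`, write `r • x = s • u + v`; since `u ⊥ V`,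
Pythagoras gives `r² = s² + ‖v‖²`, so `s ≤ r` and `x = (s / r) • u + r⁻¹ • v ∈ P`.
The point `0 = 0 • x` is handled by the nonemptiness of `P ∩ C`.
-/

/-- The wedge `W(S) = {r·x : x ∈ S, r ∈ [0,1]}`. -/
def wedge {n : ℕ} (S : Set (EuclideanSpace ℝ (Fin n))) : Set (EuclideanSpace ℝ (Fin n)) :=
  {y | ∃ r ∈ Set.Icc (0 : ℝ) 1, ∃ x ∈ S, y = r • x}

open Set

section RadialCylinder

variable {E : Type*} [NormedAddCommGroup E] [InnerProductSpace ℝ E]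

def radialCylinder (Ω : Set E) (V : Submodule ℝ E) : Set E :=
  {y | ∃ r ∈ Icc (0 : ℝ) 1, ∃ u ∈ Ω, ∃ v ∈ V, y = r • u + v}

variable {Ω : Set E} {V : Submodule ℝ E}

theorem smul_mem_radialCylinder {t : ℝ} (ht : t ∈ Icc (0 : ℝ) 1) {y : E}
    (hy : y ∈ radialCylinder Ω V) : t • y ∈ radialCylinder Ω V := by
  obtain ⟨s, hs, u, hu, v, hv, rfl⟩ := hy
  refine ⟨t * s, ⟨mul_nonneg ht.1 hs.1, mul_le_one₀ ht.2 hs.1 hs.2⟩, u, hu, t • v,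
    V.smul_mem t hv, ?_⟩
  rw [smul_add, smul_smul]

theorem norm_smul_add_sq_of_mem_orthogonal {u v : E} (hu : u ∈ Vᗮ) (hu1 : ‖u‖ = 1)
    (hv : v ∈ V) (s : ℝ) : ‖s • u + v‖ ^ 2 = s ^ 2 + ‖v‖ ^ 2 := by
  have hperp : inner ℝ (s • u) v = 0 := by
    rw [real_inner_smul_left, (Submodule.mem_orthogonal' V u).mp hu v hv, mul_zero]
  rw [sq, sq, sq, norm_add_sq_eq_norm_sq_add_norm_sq_real hperp, norm_smul, hu1,
    Real.norm_eq_abs, mul_one, abs_mul_abs_self]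

theorem mem_radialCylinder_of_smul_mem (hΩ : Ω ⊆ {x | ‖x‖ = 1} ∩ Vᗮ) {x : E}
    (hx : ‖x‖ = 1) {r : ℝ} (hr : 0 < r) (h : r • x ∈ radialCylinder Ω V) :
    x ∈ radialCylinder Ω V := by
  obtain ⟨s, hs, u, hu, v, hv, hrx⟩ := h
  have hpyth : r ^ 2 = s ^ 2 + ‖v‖ ^ 2 := by
    rw [← norm_smul_add_sq_of_mem_orthogonal (hΩ hu).2 (hΩ hu).1 hv, ← hrx, norm_smul, hx,
      Real.norm_of_nonneg hr.le, mul_one]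
  have hsr : s ≤ r := by nlinarith [hs.1, norm_nonneg v]
  refine ⟨s / r, ⟨div_nonneg hs.1 hr.le, (div_le_one hr).mpr hsr⟩, u, hu, r⁻¹ • v,
    V.smul_mem _ hv, ?_⟩
  rw [← inv_smul_smul₀ hr.ne' x, hrx, smul_add, smul_smul, div_eq_inv_mul]

end RadialCylinder

theorem wedge_inter_eq_inter_wedge {n : ℕ} {P C : Set (EuclideanSpace ℝ (Fin n))}
    (hsmul : ∀ t ∈ Icc (0 : ℝ) 1, ∀ y ∈ P, t • y ∈ P)
    (hunsmul : ∀ x ∈ C, ∀ r : ℝ, 0 < r → r • x ∈ P → x ∈ P)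
    (hne : (P ∩ C).Nonempty) : wedge (P ∩ C) = P ∩ wedge C := by
  ext y
  constructor
  · rintro ⟨r, hr, x, ⟨hxP, hxC⟩, rfl⟩
    exact ⟨hsmul r hr x hxP, r, hr, x, hxC, rfl⟩
  · rintro ⟨hyP, r, hr, x, hxC, rfl⟩
    rcases hr.1.eq_or_lt with rfl | hrpos
    · obtain ⟨z, hz⟩ := hne
      exact ⟨0, ⟨le_rfl, zero_le_one⟩, z, hz, by rw [zero_smul, zero_smul]⟩
    · exact ⟨r, hr, x, ⟨hunsmul x hxC r hrpos hyP, hxC⟩, rfl⟩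

/-- If `Ω ⊆ S^{n-1} ∩ V⊥`, `C ⊆ S^{n-1}`, and
`P = {r·u + v : r ∈ [0,1], u ∈ Ω, v ∈ V}`, then whenever `P ∩ C` is nonempty,
`W(P ∩ C) = P ∩ W(C)`. -/
theorem stmt11 (n : ℕ) (V : Submodule ℝ (EuclideanSpace ℝ (Fin n)))
    (Ω C : Set (EuclideanSpace ℝ (Fin n)))
    (hΩ : Ω ⊆ {x | ‖x‖ = 1} ∩ (Vᗮ : Set (EuclideanSpace ℝ (Fin n))))
    (hC : C ⊆ {x | ‖x‖ = 1})
    (P : Set (EuclideanSpace ℝ (Fin n)))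
    (hP : P = {y | ∃ r ∈ Set.Icc (0 : ℝ) 1, ∃ u ∈ Ω, ∃ v ∈ V, y = r • u + v})
    (hne : (P ∩ C).Nonempty) :
    wedge (P ∩ C) = P ∩ wedge C := by
  change P = radialCylinder Ω V at hP
  subst hP
  exact wedge_inter_eq_inter_wedge (fun t ht y hy => smul_mem_radialCylinder ht hy)
    (fun x hx r hr h => mem_radialCylinder_of_smul_mem hΩ (hC hx) hr h) hne
end

section
/- Let V be a linear subspace of ℝⁿ, let z ∈ V be a unit vector, let t < 1, and let C := {x ∈ S^{n−1} : ⟨x,z⟩ ≥ t}. Then for every u ∈ S^{n−1} ∩ V⊥, every v ∈ V, and every r ∈ [0,1]: r·u + v ∈ W(C) if and only if either r² + ‖v‖₂² = 0, or ( r² + ‖v‖₂² ≤ 1 and ⟨v,z⟩ ≥ √(r² + ‖v‖₂²)·t ). -/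
open scoped RealInnerProductSpace

/-!
A nonzero point lies in the wedge of a subset `S` of the unit sphere exactly when its norm is
at most `1` and its normalization lies in `S`. For the cap `{x ∈ S^{n-1} : ⟪x,z⟫ ≥ t}` the latter
reads `‖y‖·t ≤ ⟪y,z⟫`. Finally, for `y = r·u + v` with `u ⊥ V` a unit vector and `v, z ∈ V`,
Pythagoras gives `‖y‖² = r² + ‖v‖²`, and `⟪y,z⟫ = ⟪v,z⟫`.
-/

section Wedge

variable {n : ℕ}

theorem mem_wedge_iff_of_norm_eq_one {S : Set (EuclideanSpace ℝ (Fin n))}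
    (hS : ∀ x ∈ S, ‖x‖ = 1) {y : EuclideanSpace ℝ (Fin n)} :
    y ∈ wedge S ↔ (y = 0 ∧ S.Nonempty) ∨ (‖y‖ ≤ 1 ∧ ‖y‖⁻¹ • y ∈ S) := by
  constructor
  · rintro ⟨s, ⟨hs0, hs1⟩, x, hxS, rfl⟩
    have hnorm : ‖s • x‖ = s := by rw [norm_smul, Real.norm_of_nonneg hs0, hS x hxS, mul_one]
    rcases hs0.eq_or_lt with rfl | hs_pos
    · exact Or.inl ⟨zero_smul ℝ x, x, hxS⟩
    · rw [hnorm, inv_smul_smul₀ hs_pos.ne']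
      exact Or.inr ⟨hs1, hxS⟩
  · rintro (⟨rfl, x, hxS⟩ | ⟨hy1, hyS⟩)
    · exact ⟨0, ⟨le_rfl, zero_le_one⟩, x, hxS, (zero_smul ℝ x).symm⟩
    · refine ⟨‖y‖, ⟨norm_nonneg y, hy1⟩, ‖y‖⁻¹ • y, hyS, ?_⟩
      rcases eq_or_ne y 0 with rfl | hy
      · simp
      · rw [smul_inv_smul₀ (norm_ne_zero_iff.mpr hy)]

theorem mem_wedge_cap_iff {z : EuclideanSpace ℝ (Fin n)} (hz : ‖z‖ = 1) {t : ℝ} (ht : t ≤ 1)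
    {y : EuclideanSpace ℝ (Fin n)} :
    y ∈ wedge {x | ‖x‖ = 1 ∧ t ≤ ⟪x, z⟫} ↔ y = 0 ∨ (‖y‖ ≤ 1 ∧ ‖y‖ * t ≤ ⟪y, z⟫) := by
  have hz_cap : ‖z‖ = 1 ∧ t ≤ ⟪z, z⟫ := ⟨hz, by rwa [real_inner_self_eq_norm_sq, hz, one_pow]⟩
  rw [mem_wedge_iff_of_norm_eq_one fun x hx => hx.1]
  rcases eq_or_ne y 0 with rfl | hy
  · simpa using ⟨z, hz_cap⟩
  · have hy_pos : 0 < ‖y‖ := norm_pos_iff.mpr hy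
    have hnormalize : ‖‖y‖⁻¹ • y‖ = 1 := by
      rw [norm_smul, norm_inv, norm_norm, inv_mul_cancel₀ hy_pos.ne']
    simp only [hy, false_and, false_or, Set.mem_ofPred_eq, hnormalize, true_and,
      real_inner_smul_left, le_inv_mul_iff₀ hy_pos]

end Wedge

theorem norm_sq_smul_add_of_inner_eq_zero {E : Type*} [NormedAddCommGroup E]
    [InnerProductSpace ℝ E] {u v : E} (huv : ⟪u, v⟫ = 0) (r : ℝ) :
    ‖r • u + v‖ ^ 2 = r ^ 2 * ‖u‖ ^ 2 + ‖v‖ ^ 2 := by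
  have h := norm_add_sq_eq_norm_sq_add_norm_sq_real (x := r • u) (y := v)
    (by rw [real_inner_smul_left, huv, mul_zero])
  rw [norm_smul, Real.norm_eq_abs] at h
  nlinarith [sq_abs r]

/-- Membership of `r·u + v` (with `u ∈ S^{n-1} ∩ V⊥`, `v ∈ V`, `r ∈ [0,1]`) in the
wedge of the spherical cap `C = {x ∈ S^{n-1} : ⟪x,z⟫ ≥ t}` is characterized by:
either `r² + ‖v‖² = 0`, or `r² + ‖v‖² ≤ 1` and `⟪v,z⟫ ≥ √(r² + ‖v‖²)·t`. -/
theorem stmt12 (n : ℕ) (V : Submodule ℝ (EuclideanSpace ℝ (Fin n)))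
    (z : EuclideanSpace ℝ (Fin n)) (hzV : z ∈ V) (hz : ‖z‖ = 1)
    (t : ℝ) (ht : t < 1) :
    ∀ u : EuclideanSpace ℝ (Fin n), ‖u‖ = 1 → u ∈ Vᗮ →
    ∀ v : EuclideanSpace ℝ (Fin n), v ∈ V →
    ∀ r : ℝ, r ∈ Set.Icc (0 : ℝ) 1 →
      (r • u + v ∈ wedge {x : EuclideanSpace ℝ (Fin n) | ‖x‖ = 1 ∧ t ≤ ⟪x, z⟫} ↔
        (r ^ 2 + ‖v‖ ^ 2 = 0 ∨
          (r ^ 2 + ‖v‖ ^ 2 ≤ 1 ∧ Real.sqrt (r ^ 2 + ‖v‖ ^ 2) * t ≤ ⟪v, z⟫))) := by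
  intro u hu huV v hvV r _
  have hnorm_sq : ‖r • u + v‖ ^ 2 = r ^ 2 + ‖v‖ ^ 2 := by
    rw [norm_sq_smul_add_of_inner_eq_zero (Submodule.inner_left_of_mem_orthogonal hvV huV), hu,
      one_pow, mul_one]
  have hinner : ⟪r • u + v, z⟫ = ⟪v, z⟫ := by
    rw [inner_add_left, real_inner_smul_left,
      Submodule.inner_left_of_mem_orthogonal hzV huV, mul_zero, zero_add]
  rw [mem_wedge_cap_iff hz ht.le, hinner, ← hnorm_sq, Real.sqrt_sq (norm_nonneg _),
    sq_le_one_iff₀ (norm_nonneg _), sq_eq_zero_iff, norm_eq_zero]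
end
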